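/- Let X be a real Banach space, A : X → X a bounded linear operator, and R : X → X a three times continuously differentiable map. Let U : ℝ → X be differentiable with U′(t) = A(U(t)) + R(U(t)) for all t, and let t₀ ∈ ℝ, U₀ := U(t₀). For τ > 0 define the sequential-splitting improved-Euler approximation starting with the linear step: V(τ) := U₀ + τ·A(U₀ + (τ/2)·A(U₀)) and Ũ(τ) := V(τ) + τ·R(V(τ) + (τ/2)·R(V(τ))). Then, as τ → 0, U(t₀ + τ) − Ũ(τ) = (τ²/2)·(A(R(U₀)) − R′(U₀)(A(U₀))) + o(τ²); in particular, although the improved Euler scheme is of second order, sequential splitting combined with it yields only a first-order method. -/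

import Mathlib

open Asymptotics Filter Topology

/-! Both the exact solution and the splitting step are expanded to second order at `U₀`.
With `F = A + R` and `L = R′(U₀)`, the solution has second Taylor coefficient
`F′(U₀) F(U₀) = A²U₀ + ARU₀ + LAU₀ + LRU₀`. The linear step is a quadratic polynomial in `τ`,
`V(τ) = U₀ + τAU₀ + (τ²/2)A²U₀`, and an improved Euler step for `R` started at the moving point
`V(τ)` adds `τRU₀ + τ² L(AU₀ + RU₀/2)`, so the scheme's coefficient of `τ²/2` is
`A²U₀ + 2LAU₀ + LRU₀`. The two differ by the commutator term `ARU₀ − LAU₀`. -/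

section

variable {E : Type*} [NormedAddCommGroup E] [NormedSpace ℝ E]

theorem isLittleO_taylor_two_of_hasDerivAt {f f' : ℝ → E} {f'' : E} {x₀ : ℝ}
    (hf : ∀ x, HasDerivAt f (f' x) x) (hf' : HasDerivAt f' f'' x₀) :
    (fun x => f x - f x₀ - (x - x₀) • f' x₀ - ((x - x₀) ^ 2 / 2) • f'') =o[𝓝 x₀]
      fun x => (x - x₀) ^ 2 := by
  have hrem : ∀ x, HasDerivAt
      (fun x => f x - f x₀ - (x - x₀) • f' x₀ - ((x - x₀) ^ 2 / 2) • f'')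
      (f' x - f' x₀ - (x - x₀) • f'') x := by
    intro x
    have hlin := ((hasDerivAt_id x).sub_const x₀).smul_const (f' x₀)
    have hquad := ((((hasDerivAt_id x).sub_const x₀).pow 2).div_const 2).smul_const f''
    refine ((((hf x).sub_const (f x₀)).sub hlin).sub hquad).congr_deriv ?_
    simp only [id, one_smul]
    module
  have h := convex_univ.isLittleO_pow_succ_real (Set.mem_univ x₀) (n := 1)
    (fun x _ => (hrem x).hasDerivWithinAt) (by simpa using hf'.isLittleO)
  simpa using h

theorem isLittleO_ode_solution_taylor_two {F : E → E} {F' : E →L[ℝ] E} {U : ℝ → E} {t₀ : ℝ}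
    (hU : ∀ t, HasDerivAt U (F (U t)) t) (hF : HasFDerivAt F F' (U t₀)) :
    (fun τ : ℝ => U (t₀ + τ) - U t₀ - τ • F (U t₀) - (τ ^ 2 / 2) • F' (F (U t₀))) =o[𝓝 0]
      fun τ => τ ^ 2 := by
  have h := (isLittleO_taylor_two_of_hasDerivAt hU (hF.comp_hasDerivAt t₀ (hU t₀))).comp_tendsto
    ((continuous_const_add t₀).tendsto' 0 t₀ (add_zero t₀))
  simpa [Function.comp_def] using h

theorem isLittleO_smul_sub_of_hasDerivAt {g : ℝ → E} {g' : E} (hg : HasDerivAt g g' 0) :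
    (fun τ : ℝ => τ • g τ - τ • g 0 - τ ^ 2 • g') =o[𝓝 0] fun τ => τ ^ 2 := by
  have h := (isBigO_refl (fun τ : ℝ => τ) (𝓝 0)).smul_isLittleO hg.isLittleO
  refine h.congr (fun τ => ?_) (fun τ => ?_)
  · simp only [sub_zero]
    module
  · simp [sq]

noncomputable def improvedEulerStep (f : E → E) (τ : ℝ) (y : E) : E :=
  y + τ • f (y + (τ / 2) • f y)

theorem improvedEulerStep_clm (A : E →L[ℝ] E) (τ : ℝ) (y : E) :
    improvedEulerStep A τ y = y + τ • A y + (τ ^ 2 / 2) • A (A y) := by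
  simp only [improvedEulerStep, map_add, map_smul]
  module

theorem isLittleO_improvedEulerStep_sub {f : E → E} {f' : E →L[ℝ] E} {y : ℝ → E} {v : E}
    (hf : HasFDerivAt f f' (y 0)) (hy : HasDerivAt y v 0) :
    (fun τ : ℝ => improvedEulerStep f τ (y τ) - y τ - τ • f (y 0)
        - τ ^ 2 • f' (v + (1 / 2 : ℝ) • f (y 0))) =o[𝓝 0] fun τ => τ ^ 2 := by
  have hmid : HasDerivAt (fun τ : ℝ => y τ + (τ / 2) • f (y τ))
      (v + (1 / 2 : ℝ) • f (y 0)) 0 := by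
    refine (hy.add (((hasDerivAt_id (0 : ℝ)).div_const 2).smul
      (hf.comp_hasDerivAt 0 hy))).congr_deriv ?_
    simp
  have hg := isLittleO_smul_sub_of_hasDerivAt (hf.comp_hasDerivAt_of_eq 0 hmid (by simp))
  simpa [improvedEulerStep, Function.comp_def] using hg

end

theorem seq_splitting_improved_euler_linear_first_general
    {X : Type*} [NormedAddCommGroup X] [NormedSpace ℝ X]
    (A : X →L[ℝ] X) (R : X → X) (hR : ContDiff ℝ 3 R)
    (U : ℝ → X) (hU : ∀ t : ℝ, HasDerivAt U (A (U t) + R (U t)) t)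
    (t₀ : ℝ) (U₀ : X) (hU₀ : U₀ = U t₀)
    (V Utilde : ℝ → X)
    (hV : ∀ τ : ℝ, 0 < τ → V τ = U₀ + τ • A (U₀ + (τ / 2) • A U₀))
    (hUt : ∀ τ : ℝ, 0 < τ →
      Utilde τ = V τ + τ • R (V τ + (τ / 2) • R (V τ))) :
    (fun τ : ℝ =>
        U (t₀ + τ) - Utilde τ -
          (τ ^ 2 / 2) • (A (R U₀) - fderiv ℝ R U₀ (A U₀)))
      =o[𝓝[>] 0] fun τ : ℝ => τ ^ 2 := by
  subst hU₀
  have hR' : HasFDerivAt R (fderiv ℝ R (U t₀)) (U t₀) :=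
    (hR.differentiable (by norm_num) (U t₀)).hasFDerivAt
  set y : ℝ → X := fun τ => improvedEulerStep A τ (U t₀)
  have hy : HasDerivAt y (A (U t₀)) 0 := by
    simp only [y, improvedEulerStep_clm]
    refine ((((hasDerivAt_id (0 : ℝ)).smul_const (A (U t₀))).const_add (U t₀)).add
      (((hasDerivAt_pow 2 (0 : ℝ)).div_const 2).smul_const (A (A (U t₀))))).congr_deriv ?_
    simp
  have hexact := isLittleO_ode_solution_taylor_two hU (A.hasFDerivAt.add hR')
  have hy0 : y 0 = U t₀ := by simp [y, improvedEulerStep]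
  have hscheme := isLittleO_improvedEulerStep_sub (hy0 ▸ hR') hy
  rw [hy0] at hscheme
  refine ((hexact.sub hscheme).mono nhdsWithin_le_nhds).congr' ?_ EventuallyEq.rfl
  filter_upwards [self_mem_nhdsWithin] with τ (hτ : 0 < τ)
  have hVτ : V τ = y τ := hV τ hτ
  rw [hUt τ hτ, hVτ]
  simp only [y, improvedEulerStep_clm]
  simp only [improvedEulerStep, map_add, map_smul, add_apply, Pi.add_apply]
  module

/-- Sequential splitting (linear step first) combined with the second-order improved Euler
(explicit midpoint) scheme: with `V(τ) = U₀ + τA(U₀ + (τ/2)A(U₀))` and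
`Ũ(τ) = V(τ) + τR(V(τ) + (τ/2)R(V(τ)))`, the local error satisfies, as `τ → 0⁺`,
`U(t₀+τ) − Ũ(τ) = (τ²/2)(A(R(U₀)) − R′(U₀)(A(U₀))) + o(τ²)`; in particular, although the
improved Euler scheme is of second order, sequential splitting combined with it yields
only a first-order method. -/
theorem seq_splitting_improved_euler_linear_first
    {X : Type*} [NormedAddCommGroup X] [NormedSpace ℝ X] [CompleteSpace X]
    (A : X →L[ℝ] X) (R : X → X) (hR : ContDiff ℝ 3 R)
    (U : ℝ → X) (hU : ∀ t : ℝ, HasDerivAt U (A (U t) + R (U t)) t)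
    (t₀ : ℝ) (U₀ : X) (hU₀ : U₀ = U t₀)
    (V Utilde : ℝ → X)
    (hV : ∀ τ : ℝ, 0 < τ → V τ = U₀ + τ • A (U₀ + (τ / 2) • A U₀))
    (hUt : ∀ τ : ℝ, 0 < τ →
      Utilde τ = V τ + τ • R (V τ + (τ / 2) • R (V τ))) :
    (fun τ : ℝ =>
        U (t₀ + τ) - Utilde τ -
          (τ ^ 2 / 2) • (A (R U₀) - fderiv ℝ R U₀ (A U₀)))
      =o[𝓝[>] 0] fun τ : ℝ => τ ^ 2 :=
  seq_splitting_improved_euler_linear_first_general A R hR U hU t₀ U₀ hU₀ V Utilde hV hUt
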